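/- arXiv:2406.06421 — 6 statements merged into one kernel-verified Lean document; each statement's English description precedes it below -/
import Mathlib

section
/- For all integers k ≥ 2 and ℓ ≥ 0, there exists a (kℓ+1)-extendable linear k-uniform hypergraph, i.e., a linear k-uniform hypergraph in which all vertices have degree kℓ+1 except exactly one vertex of degree kℓ. -/
open Finset
open scoped Classical

variable {V : Type*}

/-- Degree of a vertex: number of edges containing it. -/
noncomputable def degree (E : Finset (Finset V)) (v : V) : ℕ :=
  (E.filter (fun e => v ∈ e)).card

/-- `E` is `k`-uniform. -/
def Uniform (E : Finset (Finset V)) (k : ℕ) : Prop := ∀ e ∈ E, e.card = k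

/-- `E` is linear: two distinct edges share at most one vertex. -/
noncomputable def Linear (E : Finset (Finset V)) : Prop :=
  ∀ e ∈ E, ∀ f ∈ E, e ≠ f → (e ∩ f).card ≤ 1

/-- The set of matchings of `E`: subsets of pairwise disjoint edges. -/
noncomputable def matchings (E : Finset (Finset V)) : Finset (Finset (Finset V)) :=
  E.powerset.filter (fun M => ∀ e ∈ M, ∀ f ∈ M, e ≠ f → Disjoint e f)

/-- Probability that a uniformly random matching of `E` leaves `v` uncovered. -/
noncomputable def uncovProb (E : Finset (Finset V)) (v : V) : ℝ :=
  (((matchings E).filter (fun M => ∀ e ∈ M, v ∉ e)).card : ℝ) / ((matchings E).card : ℝ)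

/-!
Work in the grid `Fin k × ZMod q` for a prime `q ≥ kℓ + k`. The lines `y = a x + b` with slopes
`a = 0, 1, …, kℓ` form a linear `k`-uniform hypergraph in which every point has degree `kℓ + 1`.
For each `b < kℓ`, detach the point `(0, b)` from the horizontal line `y = b` and attach a new
vertex, the head, in its place; the head then has degree `kℓ`. The `kℓ` detached points lie on
the column `x = 0` and are covered again by `ℓ` vertical edges of `k` consecutive points each.
Linearity survives: a vertical edge meets each line at most once, and the modified horizontal
lines share only the head.
-/

open Function

section IndexedFamily

variable {ι : Type*} {k : ℕ} (edge : ι → Finset V)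

theorem injective_of_card_inter_le_one [DecidableEq V] (hk : 2 ≤ k)
    (hcard : ∀ i, (edge i).card = k) (h : Pairwise fun i j => (edge i ∩ edge j).card ≤ 1) :
    Injective edge := by
  intro i j hij
  by_contra hne
  have : (edge i ∩ edge j).card ≤ 1 := h hne
  rw [hij, inter_self, hcard] at this
  omega

variable [Fintype ι]

theorem uniform_image_univ [DecidableEq V] (h : ∀ i, (edge i).card = k) :
    Uniform (univ.image edge) k := by
  simpa [Uniform] using h

theorem linear_image_univ [DecidableEq V] (h : Pairwise fun i j => (edge i ∩ edge j).card ≤ 1) :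
    Linear (univ.image edge) := by
  simp only [Linear, mem_image, mem_univ, true_and, forall_exists_index, forall_apply_eq_imp_iff]
  intro i j hne
  convert h fun hij => hne (congrArg edge hij)

theorem degree_image_univ [DecidableEq V] (hinj : Injective edge) (v : V) :
    degree (univ.image edge) v = #{i | v ∈ edge i} := by
  unfold degree
  convert card_image_of_injective {i | v ∈ edge i} hinj using 2
  ext e
  simp only [mem_filter, mem_image, mem_univ, true_and]
  grind

end IndexedFamily

theorem card_filter_univ_sum {α β : Type*} [Fintype α] [Fintype β] (P : α ⊕ β → Prop)
    [DecidablePred P] :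
    #{i | P i} = #{a | P (.inl a)} + #{b | P (.inr b)} := by
  simp only [card_filter, Fintype.sum_sum_type]

theorem card_filter_univ_prod {α β : Type*} [Fintype α] [Fintype β] (P : α × β → Prop)
    [DecidablePred P] :
    #{i | P i} = ∑ a, #{b | P (a, b)} := by
  simp only [card_filter, Fintype.sum_prod_type]

section Apex

variable {α ι : Type*} (R : ι → Prop) (S : ι → Finset α)

noncomputable def withApex (i : ι) : Finset (Option α) :=
  if R i then insertNone (S i) else (S i).map Embedding.some

variable {R S}

@[simp]
theorem some_mem_withApex {i : ι} {a : α} : some a ∈ withApex R S i ↔ a ∈ S i := by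
  unfold withApex; split_ifs <;> simp

@[simp]
theorem none_mem_withApex {i : ι} : none ∈ withApex R S i ↔ R i := by
  unfold withApex; split_ifs with h <;> simp [h]

theorem card_withApex (i : ι) : (withApex R S i).card = (S i).card + if R i then 1 else 0 := by
  unfold withApex; split_ifs <;> simp

theorem card_withApex_inter_le_one [DecidableEq α] {i j : ι} (h : (S i ∩ S j).card ≤ 1)
    (hR : R i → R j → Disjoint (S i) (S j)) : (withApex R S i ∩ withApex R S j).card ≤ 1 := by
  rw [card_le_one] at h ⊢
  simp only [mem_inter] at h ⊢
  rintro (_ | a) ⟨hai, haj⟩ (_ | b) ⟨hbi, hbj⟩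
  · rfl
  · simp only [none_mem_withApex, some_mem_withApex] at *
    exact absurd hbj (disjoint_left.1 (hR hai haj) hbi)
  · simp only [none_mem_withApex, some_mem_withApex] at *
    exact absurd haj (disjoint_left.1 (hR hbi hbj) hai)
  · simp only [some_mem_withApex] at *
    rw [h a ⟨hai, haj⟩ b ⟨hbi, hbj⟩]

end Apex

section AffineLines

variable {X F : Type*} [Fintype X] [Field F] [Fintype F] (x : X → F)

noncomputable def line (a b : F) : Finset (X × F) := {p | p.2 = a * x p.1 + b}

variable {x}

@[simp]
theorem mem_line {a b : F} {p : X × F} : p ∈ line x a b ↔ p.2 = a * x p.1 + b := by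
  simp [line]

theorem card_line (a b : F) : (line x a b).card = Fintype.card X := by
  rw [← card_univ]
  refine card_nbij' Prod.fst (fun i => (i, a * x i + b)) ?_ ?_ ?_ ?_ <;>
    simp [Set.MapsTo, Set.LeftInvOn, Set.RightInvOn, Prod.ext_iff]

theorem disjoint_line_line {a b b' : F} (h : b ≠ b') : Disjoint (line x a b) (line x a b') := by
  rw [disjoint_left]
  intro p hp hp'
  rw [mem_line] at hp hp'
  exact h (add_left_cancel (hp.symm.trans hp'))

theorem card_line_inter_line_le_one [DecidableEq X] [DecidableEq F] (hx : Injective x)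
    {a b a' b' : F} (h : (a, b) ≠ (a', b')) :
    (line x a b ∩ line x a' b').card ≤ 1 := by
  rcases eq_or_ne a a' with rfl | ha
  · have hb : b ≠ b' := fun hb => h (hb ▸ rfl)
    simp [disjoint_iff_inter_eq_empty.1 (disjoint_line_line hb)]
  rw [card_le_one]
  simp only [mem_inter, mem_line]
  rintro ⟨i, y⟩ ⟨hy, hy'⟩ ⟨j, z⟩ ⟨hz, hz'⟩
  dsimp only at hy hy' hz hz'
  have hij : x i = x j :=
    mul_left_cancel₀ (sub_ne_zero.2 ha) (by linear_combination hy' - hy - hz' + hz)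
  obtain rfl := hx hij
  rw [hy, hz]

theorem card_line_inter_le_one_of_fst_eq [DecidableEq X] [DecidableEq F] {a b : F}
    {s : Finset (X × F)} {i : X} (hs : ∀ p ∈ s, p.1 = i) : (line x a b ∩ s).card ≤ 1 := by
  rw [card_le_one]
  simp only [mem_inter, mem_line]
  rintro ⟨j, y⟩ ⟨hy, hjs⟩ ⟨j', z⟩ ⟨hz, hj's⟩
  obtain rfl : j = i := hs _ hjs
  obtain rfl : j' = j := hs _ hj's
  simp_all

theorem card_filter_mem_line [DecidableEq X] [DecidableEq F] (a : F) (p : X × F) :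
    #{b | p ∈ line x a b} = 1 := by
  rw [card_eq_one]
  exact ⟨p.2 - a * x p.1, by ext b; simp [eq_sub_iff_add_eq, add_comm, eq_comm]⟩

end AffineLines

theorem ZMod.card_filter_val_lt {q m : ℕ} [NeZero q] (hm : m ≤ q) :
    #{b : ZMod q | b.val < m} = m := by
  rw [← card_range m]
  refine card_nbij' ZMod.val Nat.cast ?_ ?_ ?_ ?_
  · intro b hb
    simpa using hb
  · intro n hn
    simp_all [ZMod.val_cast_of_lt (lt_of_lt_of_le (mem_range.1 hn) hm)]
  · intro b _
    simp
  · intro n hn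
    simp [ZMod.val_cast_of_lt (lt_of_lt_of_le (mem_range.1 hn) hm)]

def finCast (q : ℕ) {n : ℕ} (i : Fin n) : ZMod q := (i : ℕ)

theorem finCast_injective {q n : ℕ} (h : n ≤ q) : Injective (finCast q : Fin n → ZMod q) := by
  intro i j hij
  rw [finCast, finCast, ZMod.natCast_eq_natCast_iff', Nat.mod_eq_of_lt (by omega),
    Nat.mod_eq_of_lt (by omega)] at hij
  exact Fin.ext hij

@[simp]
theorem finCast_zero {q n : ℕ} [NeZero n] : finCast q (0 : Fin n) = 0 := by
  simp [finCast]

namespace Extendable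

variable (k l q : ℕ)

abbrev Index := (Fin (k * l + 1) × ZMod q) ⊕ Fin l

def throughHead : Index k l q → Prop
  | .inl (s, b) => s = 0 ∧ b.val < k * l
  | .inr _ => False

variable {k l q}

@[simp]
theorem throughHead_inl {s : Fin (k * l + 1)} {b : ZMod q} :
    throughHead k l q (.inl (s, b)) ↔ s = 0 ∧ b.val < k * l := Iff.rfl

@[simp]
theorem not_throughHead_inr {g : Fin l} : ¬throughHead k l q (.inr g) := id

theorem card_filter_throughHead [NeZero q] (hq : k * l ≤ q) :
    #{i | throughHead k l q i} = k * l := by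
  have : ({i | throughHead k l q i} : Finset (Index k l q)) =
      (({0} : Finset (Fin (k * l + 1))) ×ˢ ({b | b.val < k * l} : Finset (ZMod q))).map
        Embedding.inl := by
    ext (⟨s, b⟩ | g) <;> simp [and_comm, eq_comm]
  rw [this, card_map, card_product, card_singleton, one_mul, ZMod.card_filter_val_lt hq]

variable (k l q) [NeZero k]

noncomputable def column [NeZero q] (g : Fin l) : Finset (Fin k × ZMod q) :=
  {p | p.1 = 0 ∧ p.2.val / k = g}

variable {k l q}

@[simp]
theorem mem_column [NeZero q] {g : Fin l} {p : Fin k × ZMod q} :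
    p ∈ column k l q g ↔ p.1 = 0 ∧ p.2.val / k = g := by
  simp [column]

theorem card_column [NeZero q] (hq : k * l ≤ q) (g : Fin l) : (column k l q g).card = k := by
  have hk := Nat.pos_of_neZero k
  have hgk : g * k + k ≤ q := by nlinarith [g.2]
  calc (column k l q g).card = (Ico (g * k) (g * k + k)).card := ?_
    _ = k := by simp
  refine card_nbij' (fun p => p.2.val) (fun n => ((0 : Fin k), (n : ZMod q))) ?_ ?_ ?_ ?_
  · rintro p hp
    rw [mem_coe, mem_column, Nat.div_eq_iff hk] at hp
    rw [mem_coe, mem_Ico]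
    dsimp only
    omega
  · intro n hn
    rw [mem_coe, mem_Ico] at hn
    rw [mem_coe, mem_column]
    refine ⟨rfl, ?_⟩
    rw [ZMod.val_cast_of_lt (by omega), Nat.div_eq_iff hk]
    omega
  · rintro p hp
    rw [mem_coe, mem_column] at hp
    simp [← hp.1]
  · intro n hn
    rw [mem_coe, mem_Ico] at hn
    simp [ZMod.val_cast_of_lt (show n < q by omega)]

theorem card_filter_mem_column [NeZero q] (p : Fin k × ZMod q) :
    #{g | p ∈ column k l q g} = if p.1 = 0 ∧ p.2.val < k * l then 1 else 0 := by
  have hk := Nat.pos_of_neZero k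
  split_ifs with h
  · rw [card_eq_one]
    refine ⟨⟨p.2.val / k, (Nat.div_lt_iff_lt_mul hk).2 (by linarith [h.2])⟩, ?_⟩
    ext g
    simp [h.1, Fin.ext_iff, eq_comm]
  · rw [card_eq_zero, filter_eq_empty_iff]
    intro g _ hg
    rw [mem_column] at hg
    have := (Nat.div_eq_iff hk).1 hg.2
    have : g * k + k ≤ k * l := by nlinarith [g.2]
    exact h ⟨hg.1, by omega⟩

variable (k l q) [Fact q.Prime]

noncomputable def base : Index k l q → Finset (Fin k × ZMod q)
  | .inl (s, b) =>
    if s = 0 ∧ b.val < k * l then (line (finCast q) (finCast q s) b).erase (0, b)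
    else line (finCast q) (finCast q s) b
  | .inr g => column k l q g

noncomputable def edge : Index k l q → Finset (Option (Fin k × ZMod q)) :=
  withApex (throughHead k l q) (base k l q)

noncomputable def edges : Finset (Finset (Option (Fin k × ZMod q))) :=
  univ.image (edge k l q)

variable {k l q}

theorem base_inl_subset_line (s : Fin (k * l + 1)) (b : ZMod q) :
    base k l q (.inl (s, b)) ⊆ line (finCast q) (finCast q s) b := by
  dsimp only [base]
  split_ifs
  exacts [erase_subset _ _, subset_rfl]

theorem mem_base_inl {s : Fin (k * l + 1)} {b : ZMod q} {p : Fin k × ZMod q} :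
    p ∈ base k l q (.inl (s, b)) ↔
      p ∈ line (finCast q) (finCast q s) b ∧ ¬(s = 0 ∧ p.1 = 0 ∧ p.2.val < k * l) := by
  dsimp only [base]
  split_ifs with h
  · obtain ⟨rfl, hb⟩ := h
    simp only [mem_erase, mem_line, finCast_zero, zero_mul, zero_add, ne_eq, Prod.ext_iff]
    grind
  · refine ⟨fun hp => ⟨hp, ?_⟩, And.left⟩
    rintro ⟨rfl, -, hlt⟩
    rw [mem_line, finCast_zero, zero_mul, zero_add] at hp
    exact h ⟨rfl, hp ▸ hlt⟩

theorem card_base_add (hq : k * l ≤ q) (i : Index k l q) :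
    (base k l q i).card + (if throughHead k l q i then 1 else 0) = k := by
  rcases i with ⟨s, b⟩ | g
  · by_cases h : s = 0 ∧ b.val < k * l
    · obtain ⟨rfl, hb⟩ := h
      have hk := Nat.pos_of_neZero k
      have hmem : ((0 : Fin k), b) ∈ line (finCast q) (finCast q (0 : Fin (k * l + 1))) b := by
        simp
      simp only [base, throughHead_inl, hb, and_self, if_true, card_erase_of_mem hmem, card_line,
        Fintype.card_fin]
      omega
    · simp [base, h, card_line]
  · simp [base, card_column hq]

theorem card_base_inter_le_one (hkq : k ≤ q) (hklq : k * l < q) :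
    Pairwise fun i j : Index k l q => (base k l q i ∩ base k l q j).card ≤ 1 := by
  have hinj := finCast_injective (q := q) hkq
  rintro (⟨s, b⟩ | g) (⟨s', b'⟩ | g') hne
  · have hsb : (finCast q s, b) ≠ (finCast q s', b') := by
      intro h
      simp only [Prod.mk.injEq] at h
      exact hne (by rw [finCast_injective (by omega) h.1, h.2])
    exact (card_le_card (inter_subset_inter (base_inl_subset_line s b)
      (base_inl_subset_line s' b'))).trans (card_line_inter_line_le_one hinj hsb)
  · exact (card_le_card (inter_subset_inter_right (base_inl_subset_line s b))).trans
      (card_line_inter_le_one_of_fst_eq fun p hp => (mem_column.1 hp).1)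
  · rw [inter_comm]
    exact (card_le_card (inter_subset_inter_right (base_inl_subset_line s' b'))).trans
      (card_line_inter_le_one_of_fst_eq fun p hp => (mem_column.1 hp).1)
  · have hg : g ≠ g' := fun h => hne (by rw [h])
    rw [card_le_one]
    simp only [base, mem_inter, mem_column]
    rintro p ⟨⟨-, hp⟩, -, hp'⟩
    exact absurd (Fin.ext (hp.symm.trans hp')) hg

theorem disjoint_base_of_throughHead {i j : Index k l q} (hne : i ≠ j)
    (hi : throughHead k l q i) (hj : throughHead k l q j) :
    Disjoint (base k l q i) (base k l q j) := by
  rcases i with ⟨s, b⟩ | g <;> rcases j with ⟨s', b'⟩ | g' <;>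
    simp only [throughHead_inl, not_throughHead_inr] at hi hj
  obtain ⟨rfl, -⟩ := hi
  obtain ⟨rfl, -⟩ := hj
  exact (disjoint_line_line fun h => hne (by rw [h])).mono
    (base_inl_subset_line _ _) (base_inl_subset_line _ _)

theorem card_filter_mem_base_inl (p : Fin k × ZMod q) (s : Fin (k * l + 1)) :
    #{b | p ∈ base k l q (.inl (s, b))} = if s = 0 ∧ p.1 = 0 ∧ p.2.val < k * l then 0 else 1 := by
  simp only [mem_base_inl]
  split_ifs with h
  · simp [h]
  · simpa [h] using card_filter_mem_line (finCast q s) p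

theorem card_filter_mem_base (p : Fin k × ZMod q) : #{i | p ∈ base k l q i} = k * l + 1 := by
  rw [card_filter_univ_sum, card_filter_univ_prod, Fin.sum_univ_succ]
  simp only [card_filter_mem_base_inl, Fin.succ_ne_zero, false_and, if_false, sum_const,
    card_univ, Fintype.card_fin, smul_eq_mul, mul_one, true_and]
  rw [show #{g | p ∈ base k l q (.inr g)} = _ from card_filter_mem_column p]
  split_ifs <;> omega

theorem card_edge (hq : k * l ≤ q) (i : Index k l q) : (edge k l q i).card = k := by
  rw [edge, card_withApex, card_base_add hq]

theorem pairwise_card_edge_inter_le_one (hkq : k ≤ q) (hklq : k * l < q) :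
    Pairwise fun i j : Index k l q => (edge k l q i ∩ edge k l q j).card ≤ 1 :=
  fun _ _ hij => card_withApex_inter_le_one (card_base_inter_le_one hkq hklq hij)
    (disjoint_base_of_throughHead hij)

theorem injective_edge (hk : 2 ≤ k) (hkq : k ≤ q) (hklq : k * l < q) : Injective (edge k l q) :=
  injective_of_card_inter_le_one _ hk (card_edge hklq.le) (pairwise_card_edge_inter_le_one hkq hklq)

theorem uniform_edges (hq : k * l ≤ q) : Uniform (edges k l q) k :=
  uniform_image_univ _ (card_edge hq)

theorem linear_edges (hkq : k ≤ q) (hklq : k * l < q) : Linear (edges k l q) :=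
  linear_image_univ _ (pairwise_card_edge_inter_le_one hkq hklq)

theorem degree_edges_none (hk : 2 ≤ k) (hkq : k ≤ q) (hklq : k * l < q) :
    degree (edges k l q) none = k * l := by
  rw [edges, degree_image_univ _ (injective_edge hk hkq hklq)]
  simp only [edge, none_mem_withApex]
  exact card_filter_throughHead hklq.le

theorem degree_edges_some (hk : 2 ≤ k) (hkq : k ≤ q) (hklq : k * l < q) (p : Fin k × ZMod q) :
    degree (edges k l q) (some p) = k * l + 1 := by
  rw [edges, degree_image_univ _ (injective_edge hk hkq hklq)]
  simp only [edge, some_mem_withApex]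
  exact card_filter_mem_base p

end Extendable

/-- For all `k ≥ 2` and `ℓ ≥ 0` there exists a `(kℓ+1)`-extendable linear `k`-uniform
hypergraph: all vertices have degree `kℓ+1` except one (the head) of degree `kℓ`. -/
theorem extendable_exists (k l : ℕ) (hk : 2 ≤ k) :
    ∃ (V : Type) (_ : Finite V) (E : Finset (Finset V)),
      Uniform E k ∧ Linear E ∧
      ∃ head : V, degree E head = k * l ∧
        ∀ v : V, v ≠ head → degree E v = k * l + 1 := by
  obtain ⟨q, hq, hq_prime⟩ := Nat.exists_infinite_primes (k * l + k)
  have : Fact q.Prime := ⟨hq_prime⟩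
  have : NeZero k := ⟨by omega⟩
  have hkq : k ≤ q := by omega
  have hklq : k * l < q := by omega
  refine ⟨Option (Fin k × ZMod q), inferInstance, Extendable.edges k l q,
    Extendable.uniform_edges hklq.le, Extendable.linear_edges hkq hklq,
    none, Extendable.degree_edges_none hk hkq hklq, ?_⟩
  rintro (_ | p) hp
  · exact absurd rfl hp
  · exact Extendable.degree_edges_some hk hkq hklq p
end

section
/- Let k > 2 be a fixed integer. For all sufficiently large d, the function f_d(x) = (1 + (d−1)/(1 + (d−1)x^{k−1})^{k−1})^{−1} satisfies f_d(x) > x for every x in the interval (α_d, 1/2], where α_d ∈ (0,1) is the unique fixed point of g_d(x) = 1/(1 + (d−1)x^{k−1}). -/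
/-- `g_d(x) = 1/(1 + (d-1)x^(k-1))`. -/
noncomputable def gd (d k : ℕ) (x : ℝ) : ℝ := 1 / (1 + ((d : ℝ) - 1) * x ^ (k - 1))

/-- `f_d = g_d ∘ g_d`. -/
noncomputable def fd (d k : ℕ) (x : ℝ) : ℝ := gd d k (gd d k x)

/-- For fixed `k > 2` and all sufficiently large `d`: if `α ∈ (0,1)` is the fixed point
of `g_d`, then `f_d(x) > x` for all `x ∈ (α, 1/2]`. -/
theorem fd_gt_on_left (k : ℕ) (hk : 2 < k) :
    ∃ d₀ : ℕ, ∀ d : ℕ, d₀ ≤ d →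
      ∀ α : ℝ, α ∈ Set.Ioo (0 : ℝ) 1 → gd d k α = α →
        ∀ x ∈ Set.Ioc α (1 / 2 : ℝ), fd d k x > x := by
  refine ⟨2, fun d hd α hα hfix x hx => ?_⟩
  obtain ⟨hα0, hα1⟩ := hα
  obtain ⟨hxα, hx2⟩ := hx
  have hx0 : 0 < x := hα0.trans hxα
  have hd2 : (2:ℝ) ≤ (d:ℝ) := by exact_mod_cast hd
  set e : ℝ := (d:ℝ) - 1 with hedef
  have he1 : (1:ℝ) ≤ e := by simp [hedef]; linarith
  have he0 : 0 < e := lt_of_lt_of_le one_pos he1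
  have hk1 : k - 1 + 1 = k := by omega
  have hpowα : α ^ k = α ^ (k-1) * α := by rw [← pow_succ, hk1]
  have hpowx : x ^ k = x ^ (k-1) * x := by rw [← pow_succ, hk1]
  -- fixed point equation: α + e α^k = 1
  have hDα : (0:ℝ) < 1 + e * α ^ (k-1) := by positivity
  have hfix' : α + e * α ^ k = 1 := by
    rw [gd, div_eq_iff hDα.ne'] at hfix
    rw [hpowα]; nlinarith [hfix]
  -- u := x + e x^k > 1
  have hxk : α ^ k < x ^ k := pow_lt_pow_left₀ hxα hα0.le (by omega)
  set u : ℝ := x + e * x ^ k with hudef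
  have hu1 : 1 < u := by
    have : e * α ^ k < e * x ^ k := by exact mul_lt_mul_of_pos_left hxk he0
    simp only [hudef]; nlinarith
  -- G := denominator at x
  set G : ℝ := 1 + e * x ^ (k-1) with hGdef
  have hG1 : (1:ℝ) ≤ G := by simp only [hGdef]; nlinarith [pow_pos hx0 (k-1)]
  have hG0 : (0:ℝ) < G := lt_of_lt_of_le one_pos hG1
  have hxG : x * G = u := by simp only [hGdef, hudef]; rw [hpowx]; ring
  -- key inequality : u - x < (1-x) * u^(k-1)
  have hsq : u ^ 2 ≤ u ^ (k-1) := pow_le_pow_right₀ (by linarith) (by omega)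
  have key : u - x < (1 - x) * u ^ (k-1) := by
    have h1 : (1 - x) * u ^ 2 ≤ (1 - x) * u ^ (k-1) :=
      mul_le_mul_of_nonneg_left hsq (by linarith)
    nlinarith [sq_nonneg (u - 1)]
  -- deduce : e * x < (1-x) * G^(k-1)
  have hH0 : (0:ℝ) < G ^ (k-1) := pow_pos hG0 _
  have key2 : e * x < (1 - x) * G ^ (k-1) := by
    have hxk1 : (0:ℝ) < x ^ (k-1) := pow_pos hx0 _
    have h2 : (e * x) * x ^ (k-1) < ((1 - x) * G ^ (k-1)) * x ^ (k-1) := by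
      have hux : u - x = e * x * x ^ (k-1) := by
        simp only [hudef]; rw [hpowx]; ring
      have huk : u ^ (k-1) = x ^ (k-1) * G ^ (k-1) := by
        rw [← hxG, mul_pow]
      calc (e * x) * x ^ (k-1) = u - x := hux.symm
        _ < (1 - x) * u ^ (k-1) := key
        _ = ((1 - x) * G ^ (k-1)) * x ^ (k-1) := by rw [huk]; ring
    exact lt_of_mul_lt_mul_right h2 hxk1.le
  -- finish
  have hgdx : gd d k x = 1 / G := by rw [gd]
  have hfd : fd d k x = 1 / (1 + e * (1 / G ^ (k-1))) := by
    rw [fd, hgdx, gd, div_pow, one_pow]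
  have hD0 : (0:ℝ) < 1 + e * (1 / G ^ (k-1)) := by positivity
  rw [gt_iff_lt, hfd, lt_div_iff₀ hD0]
  have h3 : e * x / G ^ (k-1) < 1 - x := (div_lt_iff₀ hH0).mpr key2
  have hexp : x * (1 + e * (1 / G ^ (k-1))) = x + e * x / G ^ (k-1) := by
    field_simp
  rw [hexp]; linarith
end

section
/- Let k > 2 be a fixed integer. For all sufficiently large d, the derivative of f_d(x) = (1 + (d−1)/(1 + (d−1)x^{k−1})^{k−1})^{−1} satisfies f_d'(x) < 1 for all x ∈ (1/2, 1). -/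
/-!
Write `c = d - 1`, `n = k - 1` and `y = g_d x`. Since `g_d' x = -c n x^(n-1) (g_d x)^2`, the chain
rule gives `f_d' x = (c n)^2 (x y)^(n-1) (y · g_d y)^2 ≤ (c n)^2 y^3`, using `0 ≤ x, y, g_d y ≤ 1`
and `n ≥ 2`. For `x > 1/2` we have `y ≤ 2^n / c`, so `f_d' x ≤ n^2 8^n / c`, which is `< 1` once
`d` is large.
-/

section

variable {d k : ℕ} {x : ℝ}

lemma gd_denom_pos (hd : 1 ≤ d) (hx : 0 ≤ x) :
    0 < 1 + ((d : ℝ) - 1) * x ^ (k - 1) := by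
  have : (1 : ℝ) ≤ d := by exact_mod_cast hd
  have : 0 ≤ ((d : ℝ) - 1) * x ^ (k - 1) := mul_nonneg (by linarith) (pow_nonneg hx _)
  linarith

lemma gd_nonneg (hd : 1 ≤ d) (hx : 0 ≤ x) : 0 ≤ gd d k x :=
  (one_div_pos.mpr (gd_denom_pos hd hx)).le

lemma gd_le_one (hd : 1 ≤ d) (hx : 0 ≤ x) : gd d k x ≤ 1 := by
  have : (1 : ℝ) ≤ d := by exact_mod_cast hd
  exact div_le_one_of_le₀ (le_add_of_nonneg_right (mul_nonneg (by linarith) (pow_nonneg hx _)))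
    (gd_denom_pos hd hx).le

lemma gd_le_of_le {a : ℝ} (hd : 1 < d) (ha : 0 < a) (hax : a ≤ x) :
    gd d k x ≤ 1 / (((d : ℝ) - 1) * a ^ (k - 1)) := by
  have : (1 : ℝ) < d := by exact_mod_cast hd
  have hca : 0 < ((d : ℝ) - 1) * a ^ (k - 1) := mul_pos (by linarith) (pow_pos ha _)
  have : ((d : ℝ) - 1) * a ^ (k - 1) ≤ ((d : ℝ) - 1) * x ^ (k - 1) := by gcongr
  exact one_div_le_one_div_of_le hca (by linarith)

lemma hasDerivAt_gd (h : 1 + ((d : ℝ) - 1) * x ^ (k - 1) ≠ 0) :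
    HasDerivAt (gd d k) (-(((d : ℝ) - 1) * (k - 1 : ℕ) * x ^ (k - 1 - 1) * gd d k x ^ 2)) x := by
  have hden : HasDerivAt (fun x : ℝ => 1 + ((d : ℝ) - 1) * x ^ (k - 1))
      (((d : ℝ) - 1) * ((k - 1 : ℕ) * x ^ (k - 1 - 1))) x :=
    ((hasDerivAt_pow (k - 1) x).const_mul _).const_add 1
  have hgd : gd d k = (fun y => 1 + ((d : ℝ) - 1) * y ^ (k - 1))⁻¹ := by
    funext y
    exact one_div _
  have hinv := hden.inv h
  rw [← hgd] at hinv
  refine hinv.congr_deriv ?_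
  unfold gd
  field_simp

lemma hasDerivAt_fd (hd : 1 ≤ d) (hx : 0 ≤ x) :
    HasDerivAt (fd d k)
      ((((d : ℝ) - 1) * (k - 1 : ℕ)) ^ 2 * (x * gd d k x) ^ (k - 1 - 1) *
        (gd d k x * fd d k x) ^ 2) x := by
  have hgx := hasDerivAt_gd (k := k) (gd_denom_pos hd hx).ne'
  have hgy := hasDerivAt_gd (k := k) (gd_denom_pos hd (gd_nonneg (k := k) hd hx)).ne'
  refine (hgy.comp x hgx).congr_deriv ?_
  rw [show fd d k x = gd d k (gd d k x) from rfl]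
  ring

lemma deriv_fd_le (hd : 1 ≤ d) (hk : 2 < k) (hx₀ : 0 ≤ x) (hx₁ : x ≤ 1) :
    deriv (fd d k) x ≤ (((d : ℝ) - 1) * (k - 1 : ℕ)) ^ 2 * gd d k x ^ 3 := by
  rw [(hasDerivAt_fd hd hx₀).deriv]
  have hy₀ := gd_nonneg (k := k) hd hx₀
  have hy₁ := gd_le_one (k := k) hd hx₀
  have hz₀ : 0 ≤ fd d k x := gd_nonneg hd hy₀
  have hz₁ : fd d k x ≤ 1 := gd_le_one hd hy₀
  have hxy : (x * gd d k x) ^ (k - 1 - 1) ≤ gd d k x :=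
    calc (x * gd d k x) ^ (k - 1 - 1) ≤ x * gd d k x :=
          pow_le_of_le_one (by positivity) (mul_le_one₀ hx₁ hy₀ hy₁) (by omega)
      _ ≤ gd d k x := mul_le_of_le_one_left hy₀ hx₁
  have hyz : (gd d k x * fd d k x) ^ 2 ≤ gd d k x ^ 2 := by
    gcongr
    exact mul_le_of_le_one_right hy₀ hz₁
  calc _ = (((d : ℝ) - 1) * (k - 1 : ℕ)) ^ 2 *
        ((x * gd d k x) ^ (k - 1 - 1) * (gd d k x * fd d k x) ^ 2) := by ring
    _ ≤ (((d : ℝ) - 1) * (k - 1 : ℕ)) ^ 2 * (gd d k x * gd d k x ^ 2) := by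
        gcongr
    _ = _ := by ring

end

/-- For fixed `k > 2` and all sufficiently large `d`: the derivative of `f_d` is
less than `1` on `(1/2, 1)`. -/
theorem fd_deriv_lt_one (k : ℕ) (hk : 2 < k) :
    ∃ d₀ : ℕ, ∀ d : ℕ, d₀ ≤ d →
      ∀ x ∈ Set.Ioo (1 / 2 : ℝ) 1, deriv (fd d k) x < 1 := by
  refine ⟨(k - 1) ^ 2 * 8 ^ (k - 1) + 2, fun d hd x ⟨hx₁, hx₂⟩ => ?_⟩
  have hd' : ((k - 1 : ℕ) : ℝ) ^ 2 * 8 ^ (k - 1) + 2 ≤ d := by exact_mod_cast hd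
  have hc : 0 < (d : ℝ) - 1 := by
    have : (0 : ℝ) ≤ ((k - 1 : ℕ) : ℝ) ^ 2 * 8 ^ (k - 1) := by positivity
    linarith
  calc deriv (fd d k) x ≤ (((d : ℝ) - 1) * (k - 1 : ℕ)) ^ 2 * gd d k x ^ 3 :=
        deriv_fd_le (by omega) hk (by linarith) hx₂.le
    _ ≤ (((d : ℝ) - 1) * (k - 1 : ℕ)) ^ 2 * (1 / (((d : ℝ) - 1) * (1 / 2) ^ (k - 1))) ^ 3 := by
        gcongr
        · exact gd_nonneg (by omega) (by linarith)
        · exact gd_le_of_le (by omega) (by norm_num) hx₁.le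
    _ = ((k - 1 : ℕ) : ℝ) ^ 2 * 8 ^ (k - 1) / ((d : ℝ) - 1) := by
        rw [show (8 : ℝ) ^ (k - 1) = ((1 / 2) ^ (k - 1))⁻¹ ^ 3 by
          rw [← inv_pow, ← pow_mul, mul_comm, pow_mul]; norm_num]
        field_simp
    _ < 1 := by rw [div_lt_one hc]; linarith
end

section
/- Let H be a k-uniform hypergraph and v ∈ V(H) a vertex whose incident edges are e₁,…,e_m with e_i = {v, u_{i,1}, …, u_{i,k−1}}, and suppose H − v is a disjoint union of hypergraphs H_{i,j} (i ∈ [m], j ∈ [k−1]) with e_i ∩ V(H_{i,j}) = {u_{i,j}}. Then P_H(v̄) = 1/(1 + Σ_{i∈[m]} Π_{j∈[k−1]} P_{H_{i,j}}(ū_{i,j})), where probabilities are over a uniformly random matching in the respective hypergraph. -/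
open Finset
open scoped Classical
set_option maxHeartbeats 1000000

variable {V : Type*}

lemma mem_matchings {E M : Finset (Finset V)} :
    M ∈ matchings E ↔ M ⊆ E ∧ ∀ e ∈ M, ∀ f ∈ M, e ≠ f → Disjoint e f := by
  simp [matchings]

lemma empty_mem_matchings (E : Finset (Finset V)) : ∅ ∈ matchings E := by
  simp [matchings]

lemma matchings_card_pos (E : Finset (Finset V)) : 0 < (matchings E).card :=
  Finset.card_pos.2 ⟨∅, empty_mem_matchings E⟩

lemma card_matchings_biUnion {ι : Type*} [Fintype ι]
    (B : ι → Finset (Finset V)) (W : ι → Finset V)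
    (hW : ∀ p q, p ≠ q → Disjoint (W p) (W q))
    (hB : ∀ p, ∀ f ∈ B p, f ⊆ W p)
    (hne : ∀ p, ∀ f ∈ B p, f.Nonempty)
    (P : ι → Finset V → Prop) :
    ((matchings (Finset.univ.biUnion B)).filter
      (fun M => ∀ p, ∀ f ∈ M, f ∈ B p → P p f)).card
    = ∏ p, ((matchings (B p)).filter (fun M => ∀ f ∈ M, P p f)).card := by
  classical
  -- unique block membership
  have huniq : ∀ p q f, f ∈ B p → f ∈ B q → p = q := by
    intro p q f hp hq
    by_contra hpq
    have h1 := hB p f hp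
    have h2 := hB q f hq
    obtain ⟨x, hx⟩ := hne p f hp
    have : x ∈ W p ⊓ W q := Finset.mem_inter.2 ⟨h1 hx, h2 hx⟩
    rw [(hW p q hpq).eq_bot] at this
    exact absurd this (by simp)
  rw [← Fintype.card_piFinset]
  apply Finset.card_bij' (fun M _ => fun p => M ∩ B p)
    (fun F _ => Finset.univ.biUnion F)
  · -- maps to piFinset
    intro M hM
    rw [Finset.mem_filter, mem_matchings] at hM
    obtain ⟨⟨hsub, hdis⟩, hP⟩ := hM
    rw [Fintype.mem_piFinset]
    intro p
    rw [Finset.mem_filter, mem_matchings]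
    refine ⟨⟨fun f hf => (Finset.mem_inter.1 hf).2,
      fun a ha b hb hab => hdis a (Finset.mem_inter.1 ha).1 b (Finset.mem_inter.1 hb).1 hab⟩, ?_⟩
    intro f hf
    exact hP p f (Finset.mem_inter.1 hf).1 (Finset.mem_inter.1 hf).2
  · -- maps back
    intro F hF
    rw [Fintype.mem_piFinset] at hF
    have hFp : ∀ p, F p ⊆ B p ∧ (∀ a ∈ F p, ∀ b ∈ F p, a ≠ b → Disjoint a b) ∧
        ∀ f ∈ F p, P p f := by
      intro p
      have := hF p
      rw [Finset.mem_filter, mem_matchings] at this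
      exact ⟨this.1.1, this.1.2, this.2⟩
    rw [Finset.mem_filter, mem_matchings]
    refine ⟨⟨?_, ?_⟩, ?_⟩
    · intro f hf
      obtain ⟨p, _, hp⟩ := Finset.mem_biUnion.1 hf
      exact Finset.mem_biUnion.2 ⟨p, Finset.mem_univ p, (hFp p).1 hp⟩
    · intro a ha b hb hab
      obtain ⟨p, _, hp⟩ := Finset.mem_biUnion.1 ha
      obtain ⟨q, _, hq⟩ := Finset.mem_biUnion.1 hb
      by_cases hpq : p = q
      · subst hpq; exact (hFp p).2.1 a hp b hq hab
      · exact (hW p q hpq).mono (hB p a ((hFp p).1 hp)) (hB q b ((hFp q).1 hq))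
    · intro p f hf hfB
      obtain ⟨q, _, hq⟩ := Finset.mem_biUnion.1 hf
      have := huniq q p f ((hFp q).1 hq) hfB
      subst this
      exact (hFp q).2.2 f hq
  · -- left inverse
    intro M hM
    rw [Finset.mem_filter, mem_matchings] at hM
    ext f
    simp only [Finset.mem_biUnion, Finset.mem_inter, Finset.mem_univ, true_and]
    constructor
    · rintro ⟨p, hf, _⟩; exact hf
    · intro hf
      obtain ⟨p, _, hp⟩ := Finset.mem_biUnion.1 (hM.1.1 hf)
      exact ⟨p, hf, hp⟩
  · -- right inverse
    intro F hF
    rw [Fintype.mem_piFinset] at hF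
    funext p
    have hFsub : ∀ q, F q ⊆ B q := by
      intro q
      have := hF q
      rw [Finset.mem_filter, mem_matchings] at this
      exact this.1.1
    ext f
    simp only [Finset.mem_inter, Finset.mem_biUnion, Finset.mem_univ, true_and]
    constructor
    · rintro ⟨⟨q, hq⟩, hfB⟩
      have := huniq q p f (hFsub q hq) hfB
      subst this; exact hq
    · intro hf
      exact ⟨⟨p, hf⟩, hFsub p hf⟩

/-- Components-join formula: if `H - v` is a disjoint union of hypergraphs
`H_{i,j}` (one block of `k-1` components per edge `e_i` through `v`, with
`e_i ∩ V(H_{i,j}) = {u_{i,j}}`), then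
`P_H(v̄) = 1/(1 + ∑_i ∏_j P_{H_{i,j}}(ū_{i,j}))`. -/
theorem components_join (V : Type) (k m : ℕ) (E : Finset (Finset V)) (v : V)
    (hU : Uniform E k)
    (e : Fin m → Finset V) (he : ∀ i, e i ∈ E) (hve : ∀ i, v ∈ e i)
    (hinj : Function.Injective e)
    (hall : ∀ f ∈ E, v ∈ f → ∃ i, f = e i)
    (Vset : Fin m → Fin (k - 1) → Finset V)
    (hdisj : ∀ (i i' : Fin m) (j j' : Fin (k - 1)),
      (i, j) ≠ (i', j') → Disjoint (Vset i j) (Vset i' j'))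
    (hvnot : ∀ i j, v ∉ Vset i j)
    (Hij : Fin m → Fin (k - 1) → Finset (Finset V))
    (hsub : ∀ i j, ∀ f ∈ Hij i j, f ⊆ Vset i j)
    (hdel : E.filter (fun f => v ∉ f)
      = Finset.univ.biUnion (fun p : Fin m × Fin (k - 1) => Hij p.1 p.2))
    (u : Fin m → Fin (k - 1) → V)
    (hu : ∀ i j, e i ∩ Vset i j = {u i j}) :
    uncovProb E v = 1 / (1 + ∑ i : Fin m, ∏ j : Fin (k - 1), uncovProb (Hij i j) (u i j)) := by
  classical
  set ι := Fin m × Fin (k - 1)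
  set B : ι → Finset (Finset V) := fun p => Hij p.1 p.2 with hBdef
  set W : ι → Finset V := fun p => Vset p.1 p.2 with hWdef
  set D : Finset (Finset V) := E.filter (fun f => v ∉ f) with hDdef
  have hWdisj : ∀ p q : ι, p ≠ q → Disjoint (W p) (W q) := by
    intro p q hpq
    exact hdisj p.1 q.1 p.2 q.2 (by simpa using hpq)
  have hmemE : ∀ (p : ι), ∀ f ∈ B p, f ∈ E ∧ v ∉ f := by
    intro p f hf
    have hfD : f ∈ D := by
      rw [hdel]
      exact Finset.mem_biUnion.2 ⟨p, Finset.mem_univ p, hf⟩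
    rw [hDdef, Finset.mem_filter] at hfD
    exact hfD
  have hBsub : ∀ (p : ι), ∀ f ∈ B p, f ⊆ W p := fun p f hf => hsub p.1 p.2 f hf
  have hne : ∀ (p : ι), ∀ f ∈ B p, f.Nonempty := by
    intro p f hf
    have hk : 1 ≤ k := by
      have := hU (e p.1) (he p.1)
      have : 0 < (e p.1).card := Finset.card_pos.2 ⟨v, hve p.1⟩
      omega
    have : f.card = k := hU f (hmemE p f hf).1
    exact Finset.card_pos.1 (by omega)
  -- u i j lives in e i ∩ Vset i j
  have humem : ∀ i j, u i j ∈ e i ∧ u i j ∈ Vset i j := by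
    intro i j
    have : u i j ∈ e i ∩ Vset i j := by rw [hu]; simp
    exact ⟨(Finset.mem_inter.1 this).1, (Finset.mem_inter.1 this).2⟩
  -- structure of e i
  have e_struct : ∀ i, ∀ x ∈ e i, x = v ∨ ∃ j, x = u i j := by
    intro i x hx
    have huinj : Function.Injective (u i) := by
      intro j j' hjj
      by_contra hne'
      have h1 := (humem i j).2
      have h2 := (humem i j').2
      rw [hjj] at h1
      have : u i j' ∈ Vset i j ⊓ Vset i j' := Finset.mem_inter.2 ⟨h1, h2⟩
      rw [(hdisj i i j j' (by simp [hne'])).eq_bot] at this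
      exact absurd this (by simp)
    have hvni : v ∉ Finset.univ.image (u i) := by
      simp only [Finset.mem_image, Finset.mem_univ, true_and]
      rintro ⟨j, hj⟩
      exact hvnot i j (hj ▸ (humem i j).2)
    have hsubset : insert v (Finset.univ.image (u i)) ⊆ e i := by
      intro y hy
      rcases Finset.mem_insert.1 hy with h | h
      · exact h ▸ hve i
      · obtain ⟨j, _, hj⟩ := Finset.mem_image.1 h
        exact hj ▸ (humem i j).1
    have hcard : (insert v (Finset.univ.image (u i))).card = k := by
      rw [Finset.card_insert_of_notMem hvni, Finset.card_image_of_injective _ huinj]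
      simp only [Finset.card_univ, Fintype.card_fin]
      have : 0 < (e i).card := Finset.card_pos.2 ⟨v, hve i⟩
      have := hU (e i) (he i)
      omega
    have heq : insert v (Finset.univ.image (u i)) = e i :=
      Finset.eq_of_subset_of_card_le hsubset (by rw [hcard]; exact le_of_eq (hU (e i) (he i)))
    rw [← heq] at hx
    rcases Finset.mem_insert.1 hx with h | h
    · exact Or.inl h
    · obtain ⟨j, _, hj⟩ := Finset.mem_image.1 h
      exact Or.inr ⟨j, hj.symm⟩
  -- e i meets W p only when p.1 = i, and then only at u i p.2
  have e_inter : ∀ i (p : ι) (x : V), x ∈ e i → x ∈ W p → p.1 = i ∧ x = u i p.2 := by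
    intro i p x hx hxW
    rcases e_struct i x hx with h | ⟨j, hj⟩
    · exact absurd (h ▸ hxW) (hvnot p.1 p.2)
    · subst hj
      have hxj := (humem i j).2
      have hpij : (p.1, p.2) = (i, j) := by
        by_contra hne'
        have : u i j ∈ Vset p.1 p.2 ⊓ Vset i j := Finset.mem_inter.2 ⟨hxW, hxj⟩
        rw [(hdisj p.1 i p.2 j hne').eq_bot] at this
        exact absurd this (by simp)
      have h1 : p.1 = i := congrArg Prod.fst hpij
      have h2 : p.2 = j := congrArg Prod.snd hpij
      exact ⟨h1, by rw [h2]⟩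
  -- counts
  set t : ι → ℕ := fun p => (matchings (B p)).card with htdef
  set a : ι → ℕ := fun p =>
    ((matchings (B p)).filter (fun M => ∀ f ∈ M, u p.1 p.2 ∉ f)).card with hadef
  have htpos : ∀ p, 0 < t p := fun p => matchings_card_pos _
  -- Step A: v-free matchings of E are matchings of D
  have hA : (matchings E).filter (fun M => ∀ f ∈ M, v ∉ f) = matchings D := by
    ext M
    rw [Finset.mem_filter, mem_matchings, mem_matchings, hDdef]
    constructor
    · rintro ⟨⟨hs, hd⟩, hv⟩
      exact ⟨fun f hf => Finset.mem_filter.2 ⟨hs hf, hv f hf⟩, hd⟩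
    · rintro ⟨hs, hd⟩
      exact ⟨⟨fun f hf => (Finset.mem_filter.1 (hs hf)).1, hd⟩,
        fun f hf => (Finset.mem_filter.1 (hs hf)).2⟩
  -- Step B: matchings of D count
  have hDcard : (matchings D).card = ∏ p, t p := by
    refine (congrArg Finset.card ?_).trans
      ((card_matchings_biUnion B W hWdisj hBsub hne (fun _ _ => True)).trans ?_)
    · rw [hdel]
      ext M
      simp [Finset.mem_filter]
    · refine Finset.prod_congr rfl (fun p _ => ?_)
      refine (congrArg Finset.card ?_).trans (rfl : (matchings (B p)).card = t p)
      ext M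
      simp [Finset.mem_filter]
  -- Step C: partition of matchings of E
  set N : Fin m → Finset (Finset (Finset V)) :=
    fun i => (matchings E).filter (fun M => e i ∈ M) with hNdef
  have hNmem : ∀ i M, M ∈ N i ↔ M ∈ matchings E ∧ e i ∈ M := by
    intro i M; rw [hNdef]; exact Finset.mem_filter
  have hsplit : (matchings E).card = (matchings D).card + ∑ i, (N i).card := by
    have hpart : matchings E
        = ((matchings E).filter (fun M => ∀ f ∈ M, v ∉ f)) ∪ Finset.univ.biUnion N := by
      ext M
      simp only [Finset.mem_union, Finset.mem_filter, Finset.mem_biUnion, Finset.mem_univ,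
        true_and]
      constructor
      · intro hM
        by_cases hv : ∀ f ∈ M, v ∉ f
        · exact Or.inl ⟨hM, hv⟩
        · push_neg at hv
          obtain ⟨f, hfM, hvf⟩ := hv
          obtain ⟨i, rfl⟩ := hall f ((mem_matchings.1 hM).1 hfM) hvf
          exact Or.inr ⟨i, (hNmem i M).2 ⟨hM, hfM⟩⟩
      · rintro (⟨h, _⟩ | ⟨i, h⟩)
        · exact h
        · exact ((hNmem i M).1 h).1
    have hd1 : Disjoint ((matchings E).filter (fun M => ∀ f ∈ M, v ∉ f))
        (Finset.univ.biUnion N) := by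
      rw [Finset.disjoint_left]
      intro M hM hM'
      rw [Finset.mem_filter] at hM
      obtain ⟨i, _, hMi⟩ := Finset.mem_biUnion.1 hM'
      exact hM.2 (e i) ((hNmem i M).1 hMi).2 (hve i)
    have hd2 : ∀ i ∈ (Finset.univ : Finset (Fin m)), ∀ i' ∈ (Finset.univ : Finset (Fin m)),
        i ≠ i' → Disjoint (N i) (N i') := by
      intro i _ i' _ hii
      rw [Finset.disjoint_left]
      intro M hMi hMi'
      obtain ⟨hM, hei⟩ := (hNmem i M).1 hMi
      obtain ⟨_, hei'⟩ := (hNmem i' M).1 hMi'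
      have hne' : e i ≠ e i' := fun hcon => hii (hinj hcon)
      have := (mem_matchings.1 hM).2 (e i) hei (e i') hei' hne'
      simpa using this.le_bot (Finset.mem_inter.2 ⟨hve i, hve i'⟩)
    rw [hpart, Finset.card_union_of_disjoint hd1, Finset.card_biUnion hd2, hA]
  -- Step D: count of matchings containing e i
  have hNcard : ∀ i, (N i).card = ∏ p : ι, (if p.1 = i then a p else t p) := by
    intro i
    have hbij : (N i).card
        = ((matchings D).filter (fun M => ∀ f ∈ M, Disjoint f (e i))).card := by
      refine Finset.card_bij' (fun M _ => M.erase (e i)) (fun M' _ => insert (e i) M')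
        ?hi ?hj ?left ?right
      case hi =>
        intro M hM
        obtain ⟨hM, hei⟩ := (hNmem i M).1 hM
        obtain ⟨hsubE, hdisE⟩ := mem_matchings.1 hM
        have hdise : ∀ f ∈ M.erase (e i), Disjoint f (e i) := by
          intro f hf
          obtain ⟨hfne, hfM⟩ := Finset.mem_erase.1 hf
          exact hdisE f hfM (e i) hei hfne
        rw [Finset.mem_filter, mem_matchings]
        refine ⟨⟨?_, ?_⟩, hdise⟩
        · intro f hf
          have hfM := (Finset.mem_erase.1 hf).2
          rw [hDdef, Finset.mem_filter]
          refine ⟨hsubE hfM, fun hvf => ?_⟩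
          simpa using (hdise f hf).le_bot (Finset.mem_inter.2 ⟨hvf, hve i⟩)
        · intro x hx y hy hxy
          exact hdisE x (Finset.mem_erase.1 hx).2 y (Finset.mem_erase.1 hy).2 hxy
      case hj =>
        intro M' hM'
        rw [Finset.mem_filter, mem_matchings] at hM'
        obtain ⟨⟨hsubD, hdisD⟩, hdise⟩ := hM'
        have hvfree : ∀ f ∈ M', v ∉ f := by
          intro f hf
          have := hsubD hf
          rw [hDdef, Finset.mem_filter] at this
          exact this.2
        rw [hNmem, mem_matchings]
        refine ⟨⟨?_, ?_⟩, Finset.mem_insert_self _ _⟩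
        · intro f hf
          rcases Finset.mem_insert.1 hf with rfl | hf'
          · exact he i
          · have := hsubD hf'
            rw [hDdef, Finset.mem_filter] at this
            exact this.1
        · intro x hx y hy hxy
          rcases Finset.mem_insert.1 hx with rfl | hx' <;>
            rcases Finset.mem_insert.1 hy with rfl | hy'
          · exact absurd rfl hxy
          · exact (hdise y hy').symm
          · exact hdise x hx'
          · exact hdisD x hx' y hy' hxy
      case left =>
        intro M hM
        exact Finset.insert_erase ((hNmem i M).1 hM).2
      case right =>
        intro M' hM'
        rw [Finset.mem_filter, mem_matchings] at hM'
        apply Finset.erase_insert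
        intro hcon
        have := hM'.1.1 hcon
        rw [hDdef, Finset.mem_filter] at this
        exact this.2 (hve i)
    rw [hbij]
    refine (congrArg Finset.card ?_).trans
      ((card_matchings_biUnion B W hWdisj hBsub hne
        (fun p f => p.1 = i → u i p.2 ∉ f)).trans ?_)
    · rw [hdel]
      ext M
      simp only [Finset.mem_filter]
      constructor
      · rintro ⟨hM, hdisM⟩
        refine ⟨hM, fun p f hfM hfB hpi hmem => ?_⟩
        simpa using (hdisM f hfM).le_bot
          (Finset.mem_inter.2 ⟨hmem, hpi ▸ (humem i p.2).1⟩)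
      · rintro ⟨hM, hP⟩
        refine ⟨hM, fun f hfM => ?_⟩
        obtain ⟨p, _, hfB⟩ := Finset.mem_biUnion.1 ((mem_matchings.1 hM).1 hfM)
        rw [Finset.disjoint_left]
        intro x hxf hxe
        obtain ⟨hpi, hxu⟩ := e_inter i p x hxe (hBsub p f hfB hxf)
        exact hP p f hfM hfB hpi (hxu ▸ hxf)
    · refine Finset.prod_congr rfl (fun p _ => ?_)
      by_cases hpi : p.1 = i
      · rw [if_pos hpi]
        simp only [hadef]
        refine congrArg Finset.card ?_
        ext M
        simp [Finset.mem_filter, hpi]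
      · rw [if_neg hpi]
        refine (congrArg Finset.card ?_).trans (rfl : (matchings (B p)).card = t p)
        ext M
        simp only [Finset.mem_filter]
        exact ⟨fun h => h.1, fun h => ⟨h, fun f _ hc => absurd hc hpi⟩⟩
  -- Step E: algebra
  set S : ℝ := ∑ i : Fin m, ∏ j : Fin (k - 1), uncovProb (Hij i j) (u i j) with hSdef
  set T0 : ℝ := ∏ p : ι, (t p : ℝ) with hT0def
  have hT0pos : 0 < T0 := by
    rw [hT0def]
    exact Finset.prod_pos fun p _ => by exact_mod_cast htpos p
  have htne : ∀ p : ι, (t p : ℝ) ≠ 0 := fun p => by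
    exact_mod_cast (htpos p).ne'
  have huncov : ∀ (i : Fin m) (j : Fin (k - 1)),
      uncovProb (Hij i j) (u i j) = (a (i, j) : ℝ) / (t (i, j) : ℝ) := fun i j => rfl
  have hquot : ∀ i : Fin m, ((∏ p : ι, if p.1 = i then a p else t p : ℕ) : ℝ)
      = T0 * ∏ j, uncovProb (Hij i j) (u i j) := by
    intro i
    push_cast
    have step1 : (∏ p : ι, if p.1 = i then (a p : ℝ) else (t p : ℝ))
        = ∏ p : ι, ((if p.1 = i then (a p : ℝ) / (t p : ℝ) else 1) * (t p : ℝ)) := by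
      refine Finset.prod_congr rfl fun p _ => ?_
      by_cases hpi : p.1 = i
      · rw [if_pos hpi, if_pos hpi, div_mul_cancel₀ _ (htne p)]
      · rw [if_neg hpi, if_neg hpi, one_mul]
    have step2 : (∏ p : ι, if p.1 = i then (a p : ℝ) / (t p : ℝ) else 1)
        = ∏ j, uncovProb (Hij i j) (u i j) := by
      rw [Fintype.prod_prod_type
        (f := fun p : ι => if p.1 = i then (a p : ℝ) / (t p : ℝ) else 1)]
      rw [Finset.prod_eq_single i]
      · simp [huncov]
      · intro i' _ hii
        exact Finset.prod_eq_one fun j _ => if_neg hii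
      · intro h
        exact absurd (Finset.mem_univ i) h
    rw [step1, Finset.prod_mul_distrib, step2, mul_comm]
  have hSnonneg : 0 ≤ S := by
    rw [hSdef]
    refine Finset.sum_nonneg fun i _ => Finset.prod_nonneg fun j _ => ?_
    rw [huncov]
    positivity
  have hEcard : ((matchings E).card : ℝ) = T0 * (1 + S) := by
    have : ((matchings E).card : ℝ)
        = ((matchings D).card : ℝ) + ∑ i, ((N i).card : ℝ) := by
      rw [hsplit]; push_cast; ring
    rw [this]
    have h1 : ((matchings D).card : ℝ) = T0 := by
      rw [hDcard, hT0def]; push_cast; rfl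
    have h2 : (∑ i, ((N i).card : ℝ)) = T0 * S := by
      rw [hSdef, Finset.mul_sum]
      refine Finset.sum_congr rfl fun i _ => ?_
      rw [hNcard i]
      exact hquot i
    rw [h1, h2]; ring
  have hnum : ((matchings E).filter (fun M => ∀ f ∈ M, v ∉ f)).card = (matchings D).card :=
    congrArg Finset.card hA
  have hfinal : uncovProb E v = T0 / (T0 * (1 + S)) := by
    unfold uncovProb
    rw [hnum, hEcard]
    congr 1
    rw [hDcard, hT0def]
    push_cast
    rfl
  have h1S : (0:ℝ) < 1 + S := by linarith
  rw [hfinal, div_eq_div_iff (mul_pos hT0pos h1S).ne' h1S.ne']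
  ring
end

section
/- For every vertex v of a k-uniform hypergraph H with maximum degree at most d, the probability that a uniformly random matching of H leaves v uncovered is at least 1/(d+1). -/
/-! Every matching covering `v` is a matching avoiding `v` plus one of the at most `d` edges
through `v`; removing that edge is injective for each fixed edge. Hence the matchings covering `v`
are at most `d` times as many as those avoiding it, and the latter make up at least a
`1/(d+1)` fraction of all matchings. -/

open Finset
open scoped Classical

variable {V : Type*}

namespace Hypergraph

variable {E : Finset (Finset V)} {M : Finset (Finset V)}

noncomputable def avoidingMatchings (E : Finset (Finset V)) (v : V) : Finset (Finset (Finset V)) :=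
  (matchings E).filter (fun M => ∀ e ∈ M, v ∉ e)

theorem mem_matchings :
    M ∈ matchings E ↔ M ⊆ E ∧ ∀ e ∈ M, ∀ f ∈ M, e ≠ f → Disjoint e f := by
  simp [matchings]

theorem empty_mem_matchings : ∅ ∈ matchings E := by
  simp [mem_matchings]

theorem erase_mem_avoidingMatchings {e : Finset V} {v : V} (hM : M ∈ matchings E) (he : e ∈ M)
    (hv : v ∈ e) : M.erase e ∈ avoidingMatchings E v := by
  obtain ⟨hsub, hdisj⟩ := mem_matchings.1 hM
  refine mem_filter.2 ⟨mem_matchings.2 ⟨(erase_subset e M).trans hsub, ?_⟩, ?_⟩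
  · exact fun f hf g hg => hdisj f (mem_of_mem_erase hf) g (mem_of_mem_erase hg)
  · intro f hf hvf
    exact disjoint_left.1 (hdisj f (mem_of_mem_erase hf) e he (ne_of_mem_erase hf)) hvf hv

theorem card_matchings_containing_le {e : Finset V} {v : V} (hv : v ∈ e) :
    #((matchings E).filter (e ∈ ·)) ≤ #(avoidingMatchings E v) := by
  refine card_le_card_of_injOn (·.erase e) (fun M hM => ?_) (fun M₁ hM₁ M₂ hM₂ h => ?_)
  · obtain ⟨hM, he⟩ := mem_filter.1 hM
    exact erase_mem_avoidingMatchings hM he hv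
  · rw [← insert_erase (mem_filter.1 hM₁).2, ← insert_erase (mem_filter.1 hM₂).2]
    exact congrArg (insert e) h

theorem card_matchings_le (v : V) :
    #(matchings E) ≤ (degree E v + 1) * #(avoidingMatchings E v) := by
  have hcovering : (matchings E).filter (fun M => ¬ ∀ e ∈ M, v ∉ e) ⊆
      (E.filter (v ∈ ·)).biUnion (fun e => (matchings E).filter (e ∈ ·)) := by
    intro M hM
    obtain ⟨hM, hcov⟩ := mem_filter.1 hM
    obtain ⟨e, he, hv⟩ : ∃ e ∈ M, v ∈ e := by simpa using hcov
    exact mem_biUnion.2 ⟨e, mem_filter.2 ⟨(mem_matchings.1 hM).1 he, hv⟩, mem_filter.2 ⟨hM, he⟩⟩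
  calc #(matchings E)
      = #(avoidingMatchings E v) + #((matchings E).filter (fun M => ¬ ∀ e ∈ M, v ∉ e)) :=
        (card_filter_add_card_filter_not _).symm
    _ ≤ #(avoidingMatchings E v) + ∑ e ∈ E.filter (v ∈ ·), #((matchings E).filter (e ∈ ·)) :=
        Nat.add_le_add_left ((card_le_card hcovering).trans card_biUnion_le) _
    _ ≤ #(avoidingMatchings E v) + ∑ e ∈ E.filter (v ∈ ·), #(avoidingMatchings E v) :=
        Nat.add_le_add_left
          (sum_le_sum fun e he => card_matchings_containing_le (mem_filter.1 he).2) _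
    _ = (degree E v + 1) * #(avoidingMatchings E v) := by
        rw [sum_const, smul_eq_mul, degree]
        ring

end Hypergraph

open Hypergraph in
theorem uncovProb_lower_bound_general (V : Type) (d : ℕ) (E : Finset (Finset V))
    (hdeg : ∀ w : V, degree E w ≤ d) (v : V) :
    1 / ((d : ℝ) + 1) ≤ uncovProb E v := by
  have hpos : (0 : ℝ) < #(matchings E) := by
    exact_mod_cast card_pos.2 ⟨∅, empty_mem_matchings⟩
  have hcard : #(matchings E) ≤ (d + 1) * #(avoidingMatchings E v) :=
    (card_matchings_le v).trans (Nat.mul_le_mul_right _ (Nat.add_le_add_right (hdeg v) 1))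
  rw [uncovProb, ← avoidingMatchings, div_le_div_iff₀ (by positivity) hpos, one_mul, mul_comm]
  exact_mod_cast hcard

/-- If every vertex of a `k`-uniform hypergraph has degree at most `d`, then a
uniformly random matching leaves any vertex uncovered with probability at least
`1/(d+1)`. -/
theorem uncovProb_lower_bound (V : Type) (k d : ℕ) (E : Finset (Finset V))
    (hU : Uniform E k) (hdeg : ∀ w : V, degree E w ≤ d) (v : V) :
    1 / ((d : ℝ) + 1) ≤ uncovProb E v :=
  uncovProb_lower_bound_general V d E hdeg v
end

section
/- If H is an n-vertex d-regular k-uniform hypergraph (k ≥ 2, d ≥ 1), then the average size of a matching in H (expectation of |M| for M uniform over all matchings) is at most (1 − 1/(d+1)) · n/k. -/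
/-!
Deleting from a matching that covers `v` the edge through `v` gives a matching avoiding `v`,
and each matching avoiding `v` arises in this way from at most `deg v` matchings. Hence a
uniformly random matching misses `v` with probability at least `1/(d+1)`. Since the edges of a
matching are disjoint `k`-sets, `k · E|M|` is the expected number of covered vertices, i.e.
`∑ v, (1 - P(v uncovered)) ≤ n (1 - 1/(d+1))`.
-/

open Finset
open scoped Classical

variable {V : Type*}

lemma card_matchings_pos (E : Finset (Finset V)) : 0 < #(matchings E) :=
  card_pos.mpr ⟨∅, by simp [matchings]⟩

lemma mem_matchings_of_subset {E M N : Finset (Finset V)} (hM : M ∈ matchings E) (hNM : N ⊆ M) :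
    N ∈ matchings E := by
  rw [mem_matchings] at hM ⊢
  exact ⟨hNM.trans hM.1, fun e he f hf => hM.2 e (hNM he) f (hNM hf)⟩

lemma insert_filter_eq_of_mem_matchings {E M : Finset (Finset V)} {e : Finset V} {v : V}
    (hM : M ∈ matchings E) (he : e ∈ M) (hve : v ∈ e) :
    insert e {f ∈ M | v ∉ f} = M := by
  ext f
  simp only [mem_insert, mem_filter]
  constructor
  · rintro (rfl | ⟨hf, -⟩) <;> assumption
  · intro hf
    by_cases hvf : v ∈ f
    · left
      by_contra hne
      exact disjoint_left.mp ((mem_matchings.mp hM).2 e he f hf (Ne.symm hne)) hve hvf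
    · exact Or.inr ⟨hf, hvf⟩

lemma card_matchings_le_mul_card_uncovered {E : Finset (Finset V)} {v : V} {d : ℕ}
    (hv : degree E v ≤ d) :
    #(matchings E) ≤ (d + 1) * #{M ∈ matchings E | ∀ e ∈ M, v ∉ e} := by
  set U := {M ∈ matchings E | ∀ e ∈ M, v ∉ e}
  set C := {M ∈ matchings E | ¬ ∀ e ∈ M, v ∉ e}
  have hC : #C ≤ d * #U := by
    refine card_le_mul_card_image_of_maps_to (f := fun M => M.filter (fun f => v ∉ f)) ?_ d ?_
    · intro M hM
      exact mem_filter.mpr ⟨mem_matchings_of_subset (mem_filter.mp hM).1 (filter_subset _ _),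
        fun e he => (mem_filter.mp he).2⟩
    · intro N _
      -- a matching covering `v` is `N` with the edge through `v` put back
      have hfiber : {M ∈ C | M.filter (fun f => v ∉ f) = N} ⊆
          (E.filter (fun e => v ∈ e)).image (fun e => insert e N) := by
        intro M hM
        obtain ⟨hMC, rfl⟩ := mem_filter.mp hM
        obtain ⟨hM, hcov⟩ := mem_filter.mp hMC
        push Not at hcov
        obtain ⟨e, he, hve⟩ := hcov
        exact mem_image.mpr ⟨e, mem_filter.mpr ⟨(mem_matchings.mp hM).1 he, hve⟩,
          insert_filter_eq_of_mem_matchings hM he hve⟩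
      exact (card_le_card hfiber).trans (card_image_le.trans hv)
  have hsplit : #U + #C = #(matchings E) := card_filter_add_card_filter_not _
  linarith

lemma one_div_le_uncovProb {E : Finset (Finset V)} {v : V} {d : ℕ} (hv : degree E v ≤ d) :
    1 / ((d : ℝ) + 1) ≤ uncovProb E v := by
  have hT : (0 : ℝ) < #(matchings E) := by exact_mod_cast card_matchings_pos E
  rw [uncovProb, div_le_div_iff₀ (by positivity) hT, one_mul, mul_comm]
  exact_mod_cast card_matchings_le_mul_card_uncovered hv

lemma one_sub_uncovProb (E : Finset (Finset V)) (v : V) :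
    1 - uncovProb E v = #{M ∈ matchings E | v ∈ M.biUnion id} / #(matchings E) := by
  have hT : (0 : ℝ) < #(matchings E) := by exact_mod_cast card_matchings_pos E
  have hcovered : {M ∈ matchings E | v ∈ M.biUnion id}
      = {M ∈ matchings E | ¬ ∀ e ∈ M, v ∉ e} :=
    filter_congr fun M _ => by simp
  have hsplit :
      #{M ∈ matchings E | ∀ e ∈ M, v ∉ e} + #{M ∈ matchings E | v ∈ M.biUnion id}
        = #(matchings E) := by
    rw [hcovered, card_filter_add_card_filter_not]
  rw [uncovProb, eq_div_iff hT.ne', sub_mul, div_mul_cancel₀ _ hT.ne', one_mul, ← hsplit]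
  push_cast
  ring

lemma Uniform.card_biUnion_of_mem_matchings {E M : Finset (Finset V)} {k : ℕ}
    (hU : Uniform E k) (hM : M ∈ matchings E) : #(M.biUnion id) = k * #M := by
  rw [mem_matchings] at hM
  rw [card_biUnion (t := id) fun e he f hf hne => hM.2 e he f hf hne, mul_comm]
  exact sum_const_nat fun e he => hU e (hM.1 he)

lemma Uniform.mul_average_card_matching_eq [Fintype V] {E : Finset (Finset V)} {k : ℕ}
    (hU : Uniform E k) :
    k * ((∑ M ∈ matchings E, (#M : ℝ)) / #(matchings E)) = ∑ v, (1 - uncovProb E v) := by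
  have hcount : ∑ v, #{M ∈ matchings E | v ∈ M.biUnion id}
      = ∑ M ∈ matchings E, #(M.biUnion id) := by
    simpa only [bipartiteAbove, bipartiteBelow, filter_mem_eq_inter, univ_inter] using
      sum_card_bipartiteAbove_eq_sum_card_bipartiteBelow (s := univ) (t := matchings E)
        (r := fun v M => v ∈ M.biUnion id)
  simp_rw [one_sub_uncovProb, ← sum_div, mul_div_assoc', mul_sum]
  congr 1
  rw [sum_congr rfl fun M hM => hU.card_biUnion_of_mem_matchings hM] at hcount
  exact_mod_cast hcount.symm

theorem average_matching_size_general (V : Type) [Fintype V] (k d : ℕ) (hk : 2 ≤ k)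
    (E : Finset (Finset V)) (hU : Uniform E k) (hreg : ∀ w : V, degree E w = d) :
    (∑ M ∈ matchings E, (M.card : ℝ)) / ((matchings E).card : ℝ)
      ≤ (1 - 1 / ((d : ℝ) + 1)) * (Fintype.card V) / k := by
  have hk0 : (0 : ℝ) < k := by exact_mod_cast (by omega : 0 < k)
  rw [le_div_iff₀ hk0, mul_comm, hU.mul_average_card_matching_eq]
  calc ∑ v, (1 - uncovProb E v) ≤ ∑ _v : V, (1 - 1 / ((d : ℝ) + 1)) :=
        sum_le_sum fun v _ => sub_le_sub_left (one_div_le_uncovProb (hreg v).le) 1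
    _ = (1 - 1 / ((d : ℝ) + 1)) * Fintype.card V := by
        rw [sum_const, card_univ, nsmul_eq_mul, mul_comm]

/-- The average size of a matching in an `n`-vertex `d`-regular `k`-uniform hypergraph
is at most `(1 - 1/(d+1)) · n/k`. -/
theorem average_matching_size (V : Type) [Fintype V] (k d : ℕ) (hk : 2 ≤ k) (hd : 1 ≤ d)
    (E : Finset (Finset V)) (hU : Uniform E k) (hreg : ∀ w : V, degree E w = d) :
    (∑ M ∈ matchings E, (M.card : ℝ)) / ((matchings E).card : ℝ)
      ≤ (1 - 1 / ((d : ℝ) + 1)) * (Fintype.card V) / k :=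
  average_matching_size_general V k d hk E hU hreg
end
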